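/- Let F be a finite poset and R the collection of its regular upsets. Then the Heyting closure ⟨R⟩ equals the collection of all upsets of F if and only if the relation ∼∞ on F is the equality relation (i.e. x ∼∞ y implies x = y for all x, y ∈ F). -/

import Mathlib

/-- The downward closure of a set in a preorder. -/
def dwn {X : Type*} [Preorder X] (U : Set X) : Set X := {x | ∃ y ∈ U, x ≤ y}

/-- `pstar U = (U↓)ᶜ`. -/
def pstar {X : Type*} [Preorder X] (U : Set X) : Set X := (dwn U)ᶜ

/-- Heyting implication of upsets: `U ⇨ V := ((U \ V)↓)ᶜ`. -/
def heyImp {X : Type*} [Preorder X] (U V : Set X) : Set X := (dwn (U \ V))ᶜ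

/-- The regular upsets of a poset: upsets `U` with `U = U**`. -/
def regUps (F : Type*) [Preorder F] : Set (Set F) :=
  {U | IsUpperSet U ∧ U = pstar (pstar U)}

/-- `Mset x` is the set of maximal elements above `x`. -/
def Mset {X : Type*} [Preorder X] (x : X) : Set X :=
  {m | x ≤ m ∧ ∀ y, m ≤ y → y = m}

/-- The bounded bisimulation relations `∼ₙ`. -/
def simN {X : Type*} [Preorder X] : ℕ → X → X → Prop
  | 0, x, y => Mset x = Mset y
  | n + 1, x, y =>
      (∀ z, x ≤ z → ∃ w, y ≤ w ∧ simN n z w) ∧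
      (∀ w, y ≤ w → ∃ z, x ≤ z ∧ simN n z w)

/-- `x ∼∞ y` iff `x ∼ₙ y` for all `n`. -/
def simInf {X : Type*} [Preorder X] (x y : X) : Prop := ∀ n : ℕ, simN n x y

/-- The Heyting closure of a collection `R` of sets: the least collection
containing `R`, `∅` and the whole carrier, closed under `∩`, `∪` and `⇨`. -/
inductive HClos {X : Type*} [Preorder X] (R : Set (Set X)) : Set X → Prop
  | base : ∀ U ∈ R, HClos R U
  | bot : HClos R ∅
  | top : HClos R Set.univ
  | inter : ∀ {U V}, HClos R U → HClos R V → HClos R (U ∩ V)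
  | union : ∀ {U V}, HClos R U → HClos R V → HClos R (U ∪ V)
  | imp : ∀ {U V}, HClos R U → HClos R V → HClos R (heyImp U V)

section Aux

variable {F : Type*}

section Pre
variable [Preorder F]

lemma isLowerSet_dwn (U : Set F) : IsLowerSet (dwn U) := by
  intro a b hba ha
  obtain ⟨y, hy, hay⟩ := ha
  exact ⟨y, hy, hba.trans hay⟩

lemma isUpperSet_pstar (U : Set F) : IsUpperSet (pstar U) :=
  (isLowerSet_dwn U).compl

lemma isUpperSet_heyImp (U V : Set F) : IsUpperSet (heyImp U V) :=
  (isLowerSet_dwn (U \ V)).compl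

lemma mem_heyImp {U V : Set F} {y : F} :
    y ∈ heyImp U V ↔ ∀ z, y ≤ z → z ∈ U → z ∈ V := by
  simp only [heyImp, dwn, Set.mem_compl_iff, Set.mem_setOf_eq, Set.mem_diff]
  push_neg
  constructor
  · intro h z hz hzU
    by_contra hzV
    exact (h z ⟨hzU, hzV⟩) hz
  · intro h z hz hyz
    exact hz.2 (h z hyz hz.1)

lemma mem_pstar {U : Set F} {y : F} :
    y ∈ pstar U ↔ ∀ z, y ≤ z → z ∉ U := by
  simp only [pstar, dwn, Set.mem_compl_iff, Set.mem_setOf_eq]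
  push_neg
  constructor
  · intro h z hz hzU; exact (h z hzU) hz
  · intro h z hzU hyz; exact h z hyz hzU

lemma mem_pstar_pstar {U : Set F} {y : F} :
    y ∈ pstar (pstar U) ↔ ∀ z, y ≤ z → ∃ u, z ≤ u ∧ u ∈ U := by
  rw [mem_pstar]
  constructor
  · intro h z hz
    have h2 := h z hz
    rw [mem_pstar] at h2
    push_neg at h2
    obtain ⟨u, hu, huU⟩ := h2
    exact ⟨u, hu, huU⟩
  · intro h z hz hzp
    obtain ⟨u, hu, huU⟩ := h z hz
    exact (mem_pstar.mp hzp) u hu huU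

lemma subset_pstar_pstar {U : Set F} (hU : IsUpperSet U) : U ⊆ pstar (pstar U) := by
  intro v hv
  rw [mem_pstar_pstar]
  intro z hz
  exact ⟨z, le_refl z, hU hz hv⟩

lemma simN_refl : ∀ (n : ℕ) (x : F), simN n x x := by
  intro n
  induction n with
  | zero => intro x; rfl
  | succ n ih =>
      intro x
      exact ⟨fun z hz => ⟨z, hz, ih z⟩, fun w hw => ⟨w, hw, ih w⟩⟩

lemma simN_symm : ∀ (n : ℕ) {x y : F}, simN n x y → simN n y x := by
  intro n
  induction n with
  | zero => intro x y h; exact h.symm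
  | succ n ih =>
      intro x y h
      exact ⟨fun z hz => (h.2 z hz).imp (fun w hw => ⟨hw.1, ih hw.2⟩),
             fun w hw => (h.1 w hw).imp (fun z hz => ⟨hz.1, ih hz.2⟩)⟩

lemma simN_succ : ∀ (n : ℕ) {x y : F}, simN (n + 1) x y → simN n x y := by
  intro n
  induction n with
  | zero =>
      intro x y h
      ext m
      constructor
      · intro hm
        obtain ⟨w, hw, hsim⟩ := h.1 m hm.1
        have hmw : m ∈ Mset w := by
          rw [← hsim]; exact ⟨le_refl m, hm.2⟩
        exact ⟨hw.trans hmw.1, hm.2⟩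
      · intro hm
        obtain ⟨z, hz, hsim⟩ := h.2 m hm.1
        have hmz : m ∈ Mset z := by
          rw [hsim]; exact ⟨le_refl m, hm.2⟩
        exact ⟨hz.trans hmz.1, hm.2⟩
  | succ n ih =>
      intro x y h
      exact ⟨fun z hz => (h.1 z hz).imp (fun w hw => ⟨hw.1, ih hw.2⟩),
             fun w hw => (h.2 w hw).imp (fun z hz => ⟨hz.1, ih hz.2⟩)⟩

lemma simN_of_le {m n : ℕ} (h : m ≤ n) {x y : F} (hs : simN n x y) : simN m x y := by
  induction n with
  | zero => rw [Nat.le_zero.mp h]; exact hs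
  | succ n ih =>
      rcases Nat.lt_or_ge m (n+1) with h' | h'
      · exact ih (Nat.lt_succ_iff.mp h') (simN_succ n hs)
      · rw [le_antisymm h h']; exact hs

/-- `U` only depends on the `∼ₙ`-class. -/
def InvN (n : ℕ) (U : Set F) : Prop :=
  ∀ x y : F, simN n x y → (x ∈ U ↔ y ∈ U)

lemma InvN.mono {m n : ℕ} (h : m ≤ n) {U : Set F} (hU : InvN m U) : InvN n U :=
  fun x y hxy => hU x y (simN_of_le h hxy)

end Pre

section Fin
variable [Fintype F] [PartialOrder F]

lemma exists_mem_Mset (x : F) : ∃ m, m ∈ Mset x := by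
  obtain ⟨m, hm, hmax⟩ := Set.Finite.exists_maximalFor id (Set.Ici x) (Set.toFinite _)
    ⟨x, le_refl x⟩
  refine ⟨m, hm, fun y hy => ?_⟩
  exact le_antisymm (hmax (le_trans hm hy) hy) hy

lemma mem_pstar_pstar_iff_Mset {U : Set F} (hU : IsUpperSet U) {x : F} :
    x ∈ pstar (pstar U) ↔ Mset x ⊆ U := by
  rw [mem_pstar_pstar]
  constructor
  · intro h m hm
    obtain ⟨u, hmu, huU⟩ := h m hm.1
    rwa [hm.2 u hmu] at huU
  · intro h z hz
    obtain ⟨m, hm⟩ := exists_mem_Mset z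
    exact ⟨m, hm.1, h ⟨hz.trans hm.1, hm.2⟩⟩

lemma mem_reg_iff {U : Set F} (hU : U ∈ regUps F) {x : F} :
    x ∈ U ↔ Mset x ⊆ U := by
  constructor
  · intro hx
    rw [hU.2] at hx
    exact (mem_pstar_pstar_iff_Mset hU.1).mp hx
  · intro h
    rw [hU.2]
    exact (mem_pstar_pstar_iff_Mset hU.1).mpr h

lemma Iic_compl_reg {m : F} (hm : ∀ y, m ≤ y → y = m) : (Set.Iic m)ᶜ ∈ regUps F := by
  have hup : IsUpperSet ((Set.Iic m)ᶜ) := (isLowerSet_Iic m).compl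
  refine ⟨hup, Set.Subset.antisymm (subset_pstar_pstar hup) ?_⟩
  intro v hv
  rw [mem_pstar_pstar] at hv
  simp only [Set.mem_compl_iff, Set.mem_Iic]
  intro hvm
  obtain ⟨u, hmu, hu⟩ := hv m hvm
  rw [hm u hmu] at hu
  exact hu (le_refl m)

lemma hclos_isUpperSet {U : Set F} (h : HClos (regUps F) U) : IsUpperSet U := by
  induction h with
  | base U hU => exact hU.1
  | bot => exact isUpperSet_empty
  | top => exact isUpperSet_univ
  | inter h1 h2 ih1 ih2 => exact ih1.inter ih2
  | union h1 h2 ih1 ih2 => exact ih1.union ih2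
  | imp h1 h2 _ _ => exact isUpperSet_heyImp _ _

lemma hclos_sUnion {S : Set (Set F)} (hS : ∀ U ∈ S, HClos (regUps F) U) :
    HClos (regUps F) (⋃₀ S) := by
  refine Set.Finite.induction_on
    (motive := fun s _ => (∀ U ∈ s, HClos (regUps F) U) → HClos (regUps F) (⋃₀ s))
    S (Set.toFinite S) (fun _ => by simpa using HClos.bot) ?_ hS
  intro a s _ _ ih h
  rw [Set.sUnion_insert]
  exact HClos.union (h a (Set.mem_insert a s))
    (ih (fun U hU => h U (Set.mem_insert_of_mem a hU)))

lemma hclos_sInter {S : Set (Set F)} (hS : ∀ U ∈ S, HClos (regUps F) U) :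
    HClos (regUps F) (⋂₀ S) := by
  refine Set.Finite.induction_on
    (motive := fun s _ => (∀ U ∈ s, HClos (regUps F) U) → HClos (regUps F) (⋂₀ s))
    S (Set.toFinite S) (fun _ => by simpa using HClos.top) ?_ hS
  intro a s _ _ ih h
  rw [Set.sInter_insert]
  exact HClos.inter (h a (Set.mem_insert a s))
    (ih (fun U hU => h U (Set.mem_insert_of_mem a hU)))

lemma hclos_invN {U : Set F} (h : HClos (regUps F) U) : ∃ n, InvN n U := by
  induction h with
  | base U hU =>
      refine ⟨0, fun x y hxy => ?_⟩
      have hM : Mset x = Mset y := hxy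
      rw [mem_reg_iff hU, mem_reg_iff hU, hM]
  | bot => exact ⟨0, fun x y _ => Iff.rfl⟩
  | top => exact ⟨0, fun x y _ => Iff.rfl⟩
  | inter h1 h2 ih1 ih2 =>
      obtain ⟨n, hn⟩ := ih1; obtain ⟨m, hm⟩ := ih2
      refine ⟨max n m, fun x y hxy => ?_⟩
      rw [Set.mem_inter_iff, Set.mem_inter_iff,
        hn.mono (le_max_left n m) x y hxy, hm.mono (le_max_right n m) x y hxy]
  | union h1 h2 ih1 ih2 =>
      obtain ⟨n, hn⟩ := ih1; obtain ⟨m, hm⟩ := ih2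
      refine ⟨max n m, fun x y hxy => ?_⟩
      rw [Set.mem_union, Set.mem_union,
        hn.mono (le_max_left n m) x y hxy, hm.mono (le_max_right n m) x y hxy]
  | @imp U V h1 h2 ih1 ih2 =>
      obtain ⟨n, hn⟩ := ih1; obtain ⟨m, hm⟩ := ih2
      have hnU : InvN (max n m) U := hn.mono (le_max_left n m)
      have hmV : InvN (max n m) V := hm.mono (le_max_right n m)
      refine ⟨max n m + 1, fun x y hxy => ?_⟩
      have key : ∀ a b : F, simN (max n m + 1) a b → a ∈ heyImp U V → b ∈ heyImp U V := by
        intro a b hab ha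
        rw [mem_heyImp] at ha ⊢
        intro w hbw hwU
        obtain ⟨z, haz, hzw⟩ := hab.2 w hbw
        have hzU : z ∈ U := (hnU z w hzw).mpr hwU
        exact (hmV z w hzw).mp (ha z haz hzU)
      exact ⟨key x y hxy, key y x (simN_symm _ hxy)⟩

lemma ici_iic_hclos (hsim : ∀ x y : F, simInf x y → x = y) (x : F) :
    HClos (regUps F) (Set.Ici x) ∧ HClos (regUps F) ((Set.Iic x)ᶜ) := by
  have wf : WellFounded ((· > ·) : F → F → Prop) := Finite.to_wellFoundedGT.wf
  refine wf.induction
    (C := fun x => HClos (regUps F) (Set.Ici x) ∧ HClos (regUps F) ((Set.Iic x)ᶜ)) x ?_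
  clear x
  intro x IH
  set Φ : Set F := ⋃₀ (Set.Ici '' {z | x < z}) with hΦdef
  have hΦmem : HClos (regUps F) Φ := by
    apply hclos_sUnion
    rintro _ ⟨z, hz, rfl⟩
    exact (IH z hz).1
  have hΦ : ∀ w : F, w ∈ Φ ↔ x < w := by
    intro w
    simp only [hΦdef, Set.mem_sUnion, Set.mem_image, Set.mem_setOf_eq]
    constructor
    · rintro ⟨_, ⟨z, hz, rfl⟩, hw⟩
      exact lt_of_lt_of_le hz hw
    · intro hw
      exact ⟨Set.Ici w, ⟨w, hw, rfl⟩, le_refl w⟩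
  set Ψ : Set F := ⋃₀ ((fun z => (Set.Iic z)ᶜ) '' {z | x < z}) with hΨdef
  have hΨmem : HClos (regUps F) Ψ := by
    apply hclos_sUnion
    rintro _ ⟨z, hz, rfl⟩
    exact (IH z hz).2
  have hΨ : ∀ y : F, y ∈ Ψ ↔ ∃ z, x < z ∧ ¬ y ≤ z := by
    intro y
    simp only [hΨdef, Set.mem_sUnion, Set.mem_image, Set.mem_setOf_eq]
    constructor
    · rintro ⟨_, ⟨z, hz, rfl⟩, hw⟩
      exact ⟨z, hz, hw⟩
    · rintro ⟨z, hz, hyz⟩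
      exact ⟨(Set.Iic z)ᶜ, ⟨z, hz, rfl⟩, hyz⟩
  set P : Set F := ⋂₀ {U | U ∈ regUps F ∧ x ∈ U} with hPdef
  have hPmem : HClos (regUps F) P :=
    hclos_sInter (fun U hU => HClos.base U hU.1)
  set N : Set F := ⋃₀ {U | U ∈ regUps F ∧ x ∉ U} with hNdef
  have hNmem : HClos (regUps F) N :=
    hclos_sUnion (fun U hU => HClos.base U hU.1)
  set A : Set F := P ∩ heyImp (N ∪ Ψ) Φ with hAdef
  have hAmem : HClos (regUps F) A :=
    HClos.inter hPmem (HClos.imp (HClos.union hNmem hΨmem) hΦmem)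
  have hAupper : IsUpperSet A := hclos_isUpperSet hAmem
  have key : ∀ y : F, y ∈ A → x ≤ y := by
    intro y
    refine wf.induction (C := fun y => y ∈ A → x ≤ y) y ?_
    clear y
    intro y IH2 hyA
    by_contra hxy
    have hImp : ∀ z, y ≤ z → z ∈ N ∪ Ψ → z ∈ Φ := mem_heyImp.mp hyA.2
    -- (ii) everything strictly above x is above y
    have hii : ∀ w, x < w → y ≤ w := by
      intro w hw
      by_contra hyw
      have h1 : y ∈ Ψ := (hΨ y).mpr ⟨w, hw, hyw⟩
      have h2 := hImp y (le_refl y) (Or.inr h1)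
      exact hxy (le_of_lt ((hΦ y).mp h2))
    -- x and y agree on all regular upsets
    have hagree : ∀ U ∈ regUps F, (x ∈ U ↔ y ∈ U) := by
      intro U hU
      constructor
      · intro hxU
        exact hyA.1 U ⟨hU, hxU⟩
      · intro hyU
        by_contra hxU
        have h1 : y ∈ N := ⟨U, ⟨hU, hxU⟩, hyU⟩
        have h2 := hImp y (le_refl y) (Or.inl h1)
        exact hxy (le_of_lt ((hΦ y).mp h2))
    -- hence same maximal elements
    have hM : Mset x = Mset y := by
      ext m
      constructor
      · intro hmx
        refine ⟨?_, hmx.2⟩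
        by_contra hym
        have hreg := Iic_compl_reg hmx.2
        have hyU : y ∈ (Set.Iic m)ᶜ := hym
        have hxU : x ∈ (Set.Iic m)ᶜ := (hagree _ hreg).mpr hyU
        exact hxU hmx.1
      · intro hmy
        refine ⟨?_, hmy.2⟩
        by_contra hxm
        have hreg := Iic_compl_reg hmy.2
        have hxU : x ∈ (Set.Iic m)ᶜ := hxm
        have hyU : y ∈ (Set.Iic m)ᶜ := (hagree _ hreg).mp hxU
        exact hyU hmy.1
    -- (iii) everything strictly above y is above x
    have hiii : ∀ z, y < z → x ≤ z := fun z hz => IH2 z hz (hAupper hz.le hyA)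
    -- conclude x ∼∞ y
    have hsinf : simInf x y := by
      intro n
      induction n with
      | zero => exact hM
      | succ n ihn =>
          refine ⟨?_, ?_⟩
          · intro z hz
            rcases eq_or_lt_of_le hz with rfl | h
            · exact ⟨y, le_refl y, ihn⟩
            · exact ⟨z, hii z h, simN_refl n z⟩
          · intro w hw
            rcases eq_or_lt_of_le hw with rfl | h
            · exact ⟨x, le_refl x, ihn⟩
            · exact ⟨w, hiii w h, simN_refl n w⟩
    exact hxy (le_of_eq (hsim x y hsinf))
  have hA : A = Set.Ici x := by
    apply Set.Subset.antisymm
    · intro y hy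
      exact key y hy
    · intro y hy
      simp only [Set.mem_Ici] at hy
      refine ⟨?_, ?_⟩
      · intro U hU
        exact hU.1.1 hy hU.2
      · rw [mem_heyImp]
        intro z hz hzNΨ
        have hxz : x ≤ z := hy.trans hz
        rw [hΦ]
        rcases hzNΨ with hzN | hzΨ
        · obtain ⟨U, ⟨hUreg, hxU⟩, hzU⟩ := hzN
          rcases eq_or_lt_of_le hxz with rfl | h
          · exact absurd hzU hxU
          · exact h
        · obtain ⟨w, hw, hzw⟩ := (hΨ z).mp hzΨ
          rcases eq_or_lt_of_le hxz with rfl | h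
          · exact absurd hw.le hzw
          · exact h
  refine ⟨hA ▸ hAmem, ?_⟩
  have h1 : Set.Ici x \ Φ = {x} := by
    ext z
    simp only [Set.mem_diff, Set.mem_Ici, Set.mem_singleton_iff, hΦ z]
    constructor
    · rintro ⟨ha, hb⟩
      by_contra h3
      exact hb (lt_of_le_of_ne ha (Ne.symm h3))
    · rintro rfl
      exact ⟨le_refl _, lt_irrefl _⟩
  have h2 : heyImp (Set.Ici x) Φ = (Set.Iic x)ᶜ := by
    rw [heyImp, h1]
    congr 1
    ext z
    simp only [dwn, Set.mem_setOf_eq, Set.mem_singleton_iff, Set.mem_Iic]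
    constructor
    · rintro ⟨y, rfl, h⟩; exact h
    · intro h; exact ⟨x, rfl, h⟩
  rw [← h2]
  exact HClos.imp (hA ▸ hAmem) hΦmem

end Fin

end Aux

/-- for a finite poset, the Heyting closure of the regular upsets
is the collection of all upsets iff `∼∞` is the equality relation. -/
theorem stmt11 {F : Type*} [Fintype F] [PartialOrder F] :
    ({U : Set F | HClos (regUps F) U} = {U : Set F | IsUpperSet U}) ↔
    (∀ x y : F, simInf x y → x = y) := by
  constructor
  · intro h x y hxy
    have hx : HClos (regUps F) (Set.Ici x) := by
      have hmem : Set.Ici x ∈ {U : Set F | HClos (regUps F) U} := by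
        rw [h]; exact isUpperSet_Ici x
      exact hmem
    have hy : HClos (regUps F) (Set.Ici y) := by
      have hmem : Set.Ici y ∈ {U : Set F | HClos (regUps F) U} := by
        rw [h]; exact isUpperSet_Ici y
      exact hmem
    obtain ⟨n, hn⟩ := hclos_invN hx
    obtain ⟨m, hm⟩ := hclos_invN hy
    have h1 : x ≤ y := (hn x y (hxy n)).mp (le_refl x)
    have h2 : y ≤ x := (hm y x (simN_symm m (hxy m))).mp (le_refl y)
    exact le_antisymm h1 h2
  · intro hsim
    ext U
    simp only [Set.mem_setOf_eq]
    constructor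
    · exact hclos_isUpperSet
    · intro hU
      have hUeq : U = ⋃₀ (Set.Ici '' U) := by
        apply Set.Subset.antisymm
        · intro z hz
          exact ⟨Set.Ici z, ⟨z, hz, rfl⟩, le_refl z⟩
        · rintro z ⟨_, ⟨w, hw, rfl⟩, hz⟩
          exact hU hz hw
      rw [hUeq]
      apply hclos_sUnion
      rintro _ ⟨z, hz, rfl⟩
      exact (ici_iic_hclos hsim z).1
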